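/- Let A be the free ℤ-module on symbols x^α (α ranging over finitely supported integer sequences), let l ∈ ℕ, let δ⁻_l : A → A be the ℤ-linear map with δ⁻_l(x^α) = Σ_{i=1}^{l} (α_i − 1) x^{α − ε_i}, and let D_l : A → A be the ℤ-linear map with D_l(x^α) = Σ_{σ ∈ S_l} sgn(σ) x^{α + σ − 1_l}, where σ is identified with the sequence (σ(1),…,σ(l),0,0,…) and 1_l is the sequence with 1 in positions 1,…,l and 0 elsewhere. Then D_l ∘ δ⁻_l = δ⁻_l ∘ D_l. -/

import Mathlib

open Finsupp
open scoped Classical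

/-- The row index of `k` in the standard tabloid of shape `α`: the least `i` such that
`k < α 0 + ⋯ + α i`. -/
noncomputable def rowIdx (α : ℕ →₀ ℤ) (k : ℕ) : ℕ := sInf {i | (k : ℤ) < ∑ j ∈ Finset.range (i + 1), α j}

/-- The Young subgroup of `S_n` associated to `α`: the stabilizer of the standard tabloid
whose rows are the consecutive blocks of `{0, …, n-1}` of sizes `α 0, α 1, …`. -/
def youngSubgroup (n : ℕ) (α : ℕ →₀ ℤ) : Subgroup (Equiv.Perm (Fin n)) where
  carrier := {σ | ∀ k : Fin n, rowIdx α (σ k) = rowIdx α k}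
  one_mem' := fun _ => rfl
  mul_mem' := by
    intro a b ha hb k
    simpa [Equiv.Perm.mul_apply] using (ha (b k)).trans (hb k)
  inv_mem' := by
    intro a ha k
    have := ha (a⁻¹ k)
    rw [show a (a⁻¹ k) = k from Equiv.apply_symm_apply a k] at this
    exact this.symm

/-- The value at `g` of the permutation character of `G` acting on the cosets of `H`:
the number of fixed cosets.  This is the value of the character induced from the
trivial character of `H`. -/
noncomputable def permCharValue {n : ℕ} (H : Subgroup (Equiv.Perm (Fin n)))
    (g : Equiv.Perm (Fin n)) : ℤ :=
  Nat.card {x : Equiv.Perm (Fin n) ⧸ H // g • x = x}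

/-- `ξ^α`, as a function on `S_n`: the permutation character induced from the trivial
character of the Young subgroup `S_α` when `α` is nonnegative with `|α| = n`, and `0`
otherwise. -/
noncomputable def xi (n : ℕ) (α : ℕ →₀ ℤ) (g : Equiv.Perm (Fin n)) : ℤ :=
  if (∀ i, 0 ≤ α i) ∧ (α.sum fun _ v => v) = (n : ℤ) then permCharValue (youngSubgroup n α) g
  else 0

/-- An `α`-tabloid: a sequence of pairwise disjoint subsets of `{0,…,n-1}` with
`|t i| = α i` for every `i`. -/
def IsTabloid (n : ℕ) (α : ℕ →₀ ℤ) (t : ℕ → Finset (Fin n)) : Prop :=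
  (∀ i j, i ≠ j → Disjoint (t i) (t j)) ∧ ∀ i, ((t i).card : ℤ) = α i

/-- The multiset of (nonzero) parts of a finitely supported sequence. -/
def partsOf (β : ℕ →₀ ℕ) : Multiset ℕ := β.support.val.map β

/-- `σ` has cycle type `β` (with `1`s in `β` recording fixed points). -/
def HasCycleType {n : ℕ} (σ : Equiv.Perm (Fin n)) (β : ℕ →₀ ℕ) : Prop :=
  (β.sum fun _ v => v) = n ∧ σ.cycleType = Multiset.filter (fun k => 2 ≤ k) (partsOf β)

/-- A nonnegative sequence regarded as an integer sequence. -/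
noncomputable def natToZ (β : ℕ →₀ ℕ) : ℕ →₀ ℤ := Finsupp.mapRange Int.ofNat rfl β

/-- The virtual character `χ^α = ∑_{σ ∈ S_l} sgn σ · ξ^{α + σ - id_l}` (0-indexed,
the sequence `α + σ - id_l` has `i`-th entry `α i + σ i - i`). -/
noncomputable def chi (n l : ℕ) (α : ℕ →₀ ℤ) (g : Equiv.Perm (Fin n)) : ℤ :=
  ∑ σ : Equiv.Perm (Fin l),
    (Equiv.Perm.sign σ : ℤ) *
      xi n (α + ∑ i : Fin l, Finsupp.single (i : ℕ) (((σ i : ℕ) : ℤ) - (i : ℕ))) g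

/-- `ζ^α`, the irreducible character of `S_n` corresponding to the partition `α` of `n`,
given by the determinantal formula `ζ^α = χ^α` (with `l = n ≥ l(α)`). -/
noncomputable def zeta (n : ℕ) (α : ℕ →₀ ℕ) (g : Equiv.Perm (Fin n)) : ℤ :=
  chi n n (natToZ α) g

/-- `α` is a partition of `n`: weakly decreasing with `|α| = n`. -/
def IsPartitionOf (α : ℕ →₀ ℕ) (n : ℕ) : Prop :=
  (∀ i, α (i + 1) ≤ α i) ∧ (α.sum fun _ v => v) = n

/-- The `ℤ`-linear map `δ⁻_l` on the free `ℤ`-module on sequences,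
`x^α ↦ ∑_{i=1}^l (α_i - 1) x^{α - ε_i}`. -/
noncomputable def deltaMinus (l : ℕ) : ((ℕ →₀ ℤ) →₀ ℤ) →ₗ[ℤ] ((ℕ →₀ ℤ) →₀ ℤ) :=
  Finsupp.lift _ ℤ _ fun α =>
    ∑ i ∈ Finset.range l, (α i - 1) • Finsupp.single (α - Finsupp.single i 1) (1 : ℤ)

/-- The `ℤ`-linear map `D_l`, `x^α ↦ ∑_{σ ∈ S_l} sgn(σ) x^{α + σ - 1_l}` (the sequence
`α + σ - 1_l` has `i`-th entry `α i + σ(i) - 1`, written `0`-indexed). -/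
noncomputable def Dmap (l : ℕ) : ((ℕ →₀ ℤ) →₀ ℤ) →ₗ[ℤ] ((ℕ →₀ ℤ) →₀ ℤ) :=
  Finsupp.lift _ ℤ _ fun α =>
    ∑ σ : Equiv.Perm (Fin l),
      (Equiv.Perm.sign σ : ℤ) •
        Finsupp.single (α + ∑ i : Fin l, Finsupp.single (i : ℕ) (((σ i : ℕ) : ℤ))) (1 : ℤ)


/-! Write `τ = σ - 1_l`, so that `τ(i) ∈ {0, …, l - 1}`. On `x^α` the commutator
`D_l δ⁻_l - δ⁻_l D_l` has coefficient `(α_i - 1) - (α_i + τ(i) - 1) = -τ(i)` in front of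
`sgn σ · x^{α + τ - ε_i}`. Grouping the terms by `k = τ(i)`, for `k ≥ 1` the monomial
`x^{α + τ - ε_{τ⁻¹ k}}` is unchanged when `τ` is composed with the transposition of `k - 1` and
`k`, which flips the sign, so each group cancels; the group `k = 0` has coefficient `0`. -/

open Equiv

theorem Equiv.Perm.sum_sign_smul_eq_zero_of_swap_mul {ι M : Type*} [DecidableEq ι] [Fintype ι]
    [AddCommGroup M] (f : Perm ι → M) {a b : ι} (hab : a ≠ b)
    (hf : ∀ σ, f (swap a b * σ) = f σ) :
    ∑ σ : Perm ι, (Perm.sign σ : ℤ) • f σ = 0 :=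
  Finset.sum_involution (fun σ _ => swap a b * σ)
    (fun σ _ => by simp [Perm.sign_swap hab, hf])
    (fun σ _ _ => (not_congr swap_mul_eq_iff).mpr hab) (fun σ _ => Finset.mem_univ _)
    fun σ _ => swap_mul_involutive a b σ

noncomputable def finSeq {l : ℕ} (f : Fin l → ℤ) : ℕ →₀ ℤ :=
  ∑ i : Fin l, single (i : ℕ) (f i)

theorem finSeq_apply {l : ℕ} (f : Fin l → ℤ) (i : Fin l) : finSeq f i = f i := by
  rw [finSeq, finsetSum_apply, Finset.sum_eq_single i]
  · simp
  · intro j _ hji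
    exact single_eq_of_ne (by simpa [Fin.val_inj] using hji.symm)
  · simp

theorem finSeq_sub {l : ℕ} (f g : Fin l → ℤ) : finSeq (f - g) = finSeq f - finSeq g := by
  simp [finSeq, single_sub, Finset.sum_sub_distrib]

theorem finSeq_piSingle {l : ℕ} (i : Fin l) (a : ℤ) :
    finSeq (Pi.single i a) = single (i : ℕ) a := by
  rw [finSeq, Finset.sum_eq_single i]
  · simp
  · intro j _ hji
    simp [hji]
  · simp

/-- The paper's `σ - 1_l`, the permutation being 0-indexed. -/
noncomputable abbrev permSeq {l : ℕ} (σ : Perm (Fin l)) : ℕ →₀ ℤ :=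
  finSeq fun i => ((σ i : ℕ) : ℤ)

theorem permSeq_sub_single {l : ℕ} (σ : Perm (Fin l)) (k : Fin l) :
    permSeq σ - single (σ⁻¹ k : ℕ) 1 =
      finSeq fun i => ((σ i : ℕ) : ℤ) - if σ i = k then 1 else 0 := by
  rw [← finSeq_piSingle, ← finSeq_sub]
  congr 1
  funext i
  simp [Pi.single_apply, eq_symm_apply]

theorem sum_sign_smul_single_permSeq_sub_eq_zero {l : ℕ} (α : ℕ →₀ ℤ) {a b : Fin l}
    (hab : (a : ℕ) = b + 1) :
    ∑ σ : Perm (Fin l),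
      (Perm.sign σ : ℤ) • single (α + permSeq σ - single (σ⁻¹ a : ℕ) 1) (1 : ℤ) = 0 := by
  -- Composing with `swap a b` exchanges the values `a` and `a - 1`, fixing `σ - ε_{σ⁻¹ a}`.
  refine Perm.sum_sign_smul_eq_zero_of_swap_mul _ (a := a) (b := b) (by omega) fun σ => ?_
  simp only [add_sub_assoc, permSeq_sub_single]
  congr 3
  funext i
  simp only [Perm.mul_apply]
  have hba : b ≠ a := by omega
  rcases eq_or_ne (σ i) a with h | ha
  · simp [h, hba]; omega
  rcases eq_or_ne (σ i) b with h | hb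
  · simp [h, hba]; omega
  · simp [swap_apply_of_ne_of_ne ha hb, ha]

theorem sum_sign_mul_smul_single_permSeq_sub_eq_zero {l : ℕ} (α : ℕ →₀ ℤ) :
    ∑ σ : Perm (Fin l), ∑ i : Fin l,
      ((Perm.sign σ : ℤ) * ((σ i : ℕ) : ℤ)) •
        single (α + permSeq σ - single (i : ℕ) 1) (1 : ℤ) = 0 := by
  calc _ = ∑ σ : Perm (Fin l), ∑ k : Fin l,
        ((Perm.sign σ : ℤ) * ((k : ℕ) : ℤ)) •
          single (α + permSeq σ - single (σ⁻¹ k : ℕ) 1) (1 : ℤ) :=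
        Finset.sum_congr rfl fun σ _ => (Equiv.sum_comp σ⁻¹ _).symm.trans (by simp)
    _ = ∑ k : Fin l, ((k : ℕ) : ℤ) • ∑ σ : Perm (Fin l),
          (Perm.sign σ : ℤ) • single (α + permSeq σ - single (σ⁻¹ k : ℕ) 1) (1 : ℤ) := by
        rw [Finset.sum_comm]
        simp only [Finset.smul_sum, smul_smul, mul_comm]
    _ = 0 := by
        refine Finset.sum_eq_zero fun k _ => ?_
        rcases Nat.eq_zero_or_eq_succ_pred k with hk | hk
        · simp [hk]
        · rw [sum_sign_smul_single_permSeq_sub_eq_zero α (b := ⟨k - 1, by omega⟩) hk, smul_zero]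

theorem deltaMinus_single (l : ℕ) (β : ℕ →₀ ℤ) :
    deltaMinus l (single β 1) =
      ∑ i ∈ Finset.range l, (β i - 1) • single (β - single i 1) (1 : ℤ) := by
  simp [deltaMinus]

theorem Dmap_single (l : ℕ) (β : ℕ →₀ ℤ) :
    Dmap l (single β 1) =
      ∑ σ : Perm (Fin l), (Perm.sign σ : ℤ) • single (β + permSeq σ) (1 : ℤ) := by
  simp [Dmap, finSeq]

theorem Dmap_deltaMinus_single_sub (l : ℕ) (α : ℕ →₀ ℤ) :
    Dmap l (deltaMinus l (single α 1)) - deltaMinus l (Dmap l (single α 1)) =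
      -∑ σ : Perm (Fin l), ∑ i : Fin l,
        ((Perm.sign σ : ℤ) * ((σ i : ℕ) : ℤ)) •
          single (α + permSeq σ - single (i : ℕ) 1) (1 : ℤ) := by
  simp only [deltaMinus_single, Dmap_single, map_sum, map_zsmul, Finset.smul_sum]
  rw [Finset.sum_comm, ← Finset.sum_sub_distrib, ← Finset.sum_neg_distrib]
  refine Finset.sum_congr rfl fun σ _ => ?_
  rw [← Finset.sum_sub_distrib, ← Finset.sum_neg_distrib, Finset.sum_range]
  refine Finset.sum_congr rfl fun i _ => ?_
  rw [Finsupp.add_apply, finSeq_apply, sub_add_eq_add_sub, smul_smul, smul_smul, ← sub_smul,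
    ← neg_smul]
  congr 1
  ring

/-- `D_l` and `δ⁻_l` commute. -/
theorem stmt4 (l : ℕ) : (Dmap l).comp (deltaMinus l) = (deltaMinus l).comp (Dmap l) := by
  refine lhom_ext' fun α => LinearMap.ext_ring ?_
  simp only [LinearMap.comp_apply, lsingle_apply]
  rw [← sub_eq_zero, Dmap_deltaMinus_single_sub,
    sum_sign_mul_smul_single_permSeq_sub_eq_zero, neg_zero]
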